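/- Let μ be a finite measure on a measurable space Ω and w : Ω → [0,∞)^I a measurable map, where I is finite and nonempty. Define for each nonempty A ⊆ I and x ∈ (0,∞)^I: V^A(x) = ∫ max_{i∈A} (w_i(ω)/x_i) dμ(ω). Then for nonempty A ⊆ I, the Möbius-type combination d_A(x) = Σ_{B ⊇ A^c, B ≠ ∅} (-1)^{|B∩A|+1} V^B(x) equals ∫ [min_{i∈A}(w_i(ω)/x_i) − max_{j∈A^c}(w_j(ω)/x_j)]_+ dμ(ω), and in particular d_A(x) ≥ 0. -/

import Mathlib

open Finset MeasureTheory

/-- Maximum over a finite set with the convention `max ∅ = 0`. -/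
noncomputable def fmax {ι : Type*} (S : Finset ι) (a : ι → ℝ) : ℝ := S.fold max 0 a

lemma fmax_empty {ι : Type*} (a : ι → ℝ) : fmax (∅ : Finset ι) a = 0 := rfl

lemma fmax_insert {ι : Type*} [DecidableEq ι] {i : ι} {S : Finset ι} (h : i ∉ S) (a : ι → ℝ) :
    fmax (insert i S) a = max (a i) (fmax S a) := Finset.fold_insert h

lemma fmax_nonneg {ι : Type*} (S : Finset ι) (a : ι → ℝ) : 0 ≤ fmax S a := by
  classical
  induction S using Finset.induction_on with
  | empty => simp [fmax_empty]
  | @insert i S hi ih => rw [fmax_insert hi]; exact le_max_of_le_right ih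

lemma fmax_union {ι : Type*} [DecidableEq ι] {S T : Finset ι} (h : Disjoint S T) (a : ι → ℝ) :
    fmax (S ∪ T) a = max (fmax S a) (fmax T a) := by
  induction S using Finset.induction_on with
  | empty => simp [fmax_empty, max_eq_right (fmax_nonneg T a)]
  | @insert i S hi ih =>
      have hd : Disjoint S T := (Finset.disjoint_insert_left.mp h).2
      have hiT : i ∉ T := (Finset.disjoint_insert_left.mp h).1
      have hiST : i ∉ S ∪ T := by simp [hi, hiT]
      rw [Finset.insert_union, fmax_insert hiST, ih hd, fmax_insert hi, max_assoc]

lemma max_add_max (u v c : ℝ) :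
    max u c + max v c = max (min u v) c + max (max u v) c := by
  rcases le_total u v with h | h
  · rw [min_eq_left h, max_eq_right h]
  · rw [min_eq_right h, max_eq_left h, add_comm]

lemma key_alg (u v c : ℝ) :
    (max u c - c) + -(max u (max v c) - max v c) = max (min v u) c - c := by
  have h1 : max u (max v c) = max (max v u) c := by
    rw [← max_assoc, max_comm u v]
  rw [h1]
  have h2 := max_add_max v u c
  linarith

lemma keyH {ι : Type*} [DecidableEq ι] (b : ι → ℝ) (A : Finset ι) :
    ∀ c : ℝ, 0 ≤ c →
      ∑ S ∈ A.powerset, (-1 : ℝ) ^ (S.card + 1) * max (fmax S b) c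
        = (if h : A.Nonempty then max (A.inf' h b) c else 0) - c := by
  induction A using Finset.induction_on with
  | empty =>
      intro c hc
      simp [fmax_empty, max_eq_right hc]
  | @insert i A hi ih =>
      intro c hc
      have hdisj : Disjoint A.powerset (A.powerset.image (insert i)) := by
        rw [Finset.disjoint_right]
        rintro S hS hS'
        obtain ⟨T, -, rfl⟩ := Finset.mem_image.mp hS
        exact hi (Finset.mem_powerset.mp hS' (Finset.mem_insert_self i T))
      have hinj : ∀ T ∈ A.powerset, ∀ U ∈ A.powerset, insert i T = insert i U → T = U := by
        intro T hT U hU hTU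
        have hiT : i ∉ T := fun h => hi (Finset.mem_powerset.mp hT h)
        have hiU : i ∉ U := fun h => hi (Finset.mem_powerset.mp hU h)
        rw [← Finset.erase_insert hiT, ← Finset.erase_insert hiU, hTU]
      rw [Finset.powerset_insert, Finset.sum_union hdisj, Finset.sum_image hinj]
      set c' := max (b i) c with hc'def
      have hc'0 : 0 ≤ c' := le_trans hc (le_max_right _ _)
      have hterm : ∀ T ∈ A.powerset,
          (-1 : ℝ) ^ ((insert i T).card + 1) * max (fmax (insert i T) b) c
            = -((-1 : ℝ) ^ (T.card + 1) * max (fmax T b) c') := by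
        intro T hT
        have hiT : i ∉ T := fun h => hi (Finset.mem_powerset.mp hT h)
        rw [Finset.card_insert_of_notMem hiT, fmax_insert hiT,
          max_comm (b i) (fmax T b), max_assoc, ← hc'def, pow_succ]
        ring
      rw [Finset.sum_congr rfl hterm, Finset.sum_neg_distrib, ih c hc, ih c' hc'0]
      by_cases hAne : A.Nonempty
      · rw [dif_pos hAne, dif_pos hAne, dif_pos (Finset.insert_nonempty i A),
          Finset.inf'_insert hAne, hc'def]
        exact key_alg (A.inf' hAne b) (b i) c
      · rw [Finset.not_nonempty_iff_eq_empty] at hAne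
        subst hAne
        simp [fmax_empty, Finset.inf'_singleton, max_eq_right hc, hc'def]
        ring
  
lemma pointwise_moebius {ι : Type*} [Fintype ι] [DecidableEq ι] (b : ι → ℝ)
    (hb : ∀ i, 0 ≤ b i) (A : Finset ι) (hA : A.Nonempty) :
    ∑ B ∈ Finset.univ.powerset.filter (fun B => Aᶜ ⊆ B ∧ B.Nonempty),
        (-1 : ℝ) ^ ((B ∩ A).card + 1) * fmax B b
      = max ((A.inf' hA b) - fmax Aᶜ b) 0 := by
  by_cases hAc : (Aᶜ : Finset ι) = ∅
  · have hAuniv : A = Finset.univ := (Finset.compl_eq_empty_iff A).mp hAc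
    have h1 : Finset.univ.powerset.filter (fun B => Aᶜ ⊆ B ∧ B.Nonempty)
        = A.powerset.filter (fun B => B.Nonempty) := by
      ext B; simp [hAc, hAuniv]
    have h2 : ∀ B ∈ A.powerset.filter (fun B => B.Nonempty),
        (-1 : ℝ) ^ ((B ∩ A).card + 1) * fmax B b
          = (-1 : ℝ) ^ (B.card + 1) * max (fmax B b) 0 := by
      intro B hB
      have hBA : B ⊆ A := Finset.mem_powerset.mp (Finset.mem_filter.mp hB).1
      rw [Finset.inter_eq_left.mpr hBA, max_eq_left (fmax_nonneg B b)]
    have h3 : A.powerset.filter (fun B => B.Nonempty) ⊆ A.powerset :=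
      Finset.filter_subset _ _
    have h4 : ∀ B ∈ A.powerset, B ∉ A.powerset.filter (fun B => B.Nonempty) →
        (-1 : ℝ) ^ (B.card + 1) * max (fmax B b) 0 = 0 := by
      intro B hB hB'
      have : B = ∅ := by
        by_contra hne
        exact hB' (Finset.mem_filter.mpr ⟨hB, Finset.nonempty_iff_ne_empty.mpr hne⟩)
      subst this
      simp [fmax_empty]
    have hkey := keyH b A 0 le_rfl
    rw [dif_pos hA] at hkey
    rw [h1, Finset.sum_congr rfl h2, Finset.sum_subset h3 h4, hkey, hAc, fmax_empty, sub_zero,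
      sub_zero]
  · have hAcne : (Aᶜ : Finset ι).Nonempty := Finset.nonempty_iff_ne_empty.mpr hAc
    set c := fmax Aᶜ b with hcdef
    have hc0 : 0 ≤ c := fmax_nonneg _ _
    have hsum : ∑ B ∈ Finset.univ.powerset.filter (fun B => Aᶜ ⊆ B ∧ B.Nonempty),
        (-1 : ℝ) ^ ((B ∩ A).card + 1) * fmax B b
          = ∑ S ∈ A.powerset, (-1 : ℝ) ^ (S.card + 1) * max (fmax S b) c := by
      refine Finset.sum_nbij' (fun B => B ∩ A) (fun S => S ∪ Aᶜ) ?_ ?_ ?_ ?_ ?_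
      · intro B hB
        exact Finset.mem_powerset.mpr (Finset.inter_subset_right)
      · intro S hS
        refine Finset.mem_filter.mpr ⟨Finset.mem_powerset.mpr (Finset.subset_univ _),
          Finset.subset_union_right, hAcne.mono Finset.subset_union_right⟩
      · intro B hB
        obtain ⟨-, hAcB, -⟩ := Finset.mem_filter.mp hB
        ext j
        simp only [Finset.mem_union, Finset.mem_inter, Finset.mem_compl]
        have hj2 : j ∉ A → j ∈ B := fun h => hAcB (Finset.mem_compl.mpr h)
        tauto
      · intro S hS
        have hSA : S ⊆ A := Finset.mem_powerset.mp hS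
        ext j
        simp only [Finset.mem_inter, Finset.mem_union, Finset.mem_compl]
        have hj2 : j ∈ S → j ∈ A := fun h => hSA h
        tauto
      · intro B hB
        obtain ⟨-, hAcB, -⟩ := Finset.mem_filter.mp hB
        have hBdecomp : B = (B ∩ A) ∪ Aᶜ := by
          ext j
          simp only [Finset.mem_union, Finset.mem_inter, Finset.mem_compl]
          have hj2 : j ∉ A → j ∈ B := fun h => hAcB (Finset.mem_compl.mpr h)
          by_cases hj : j ∈ A <;> tauto
        have hdisj : Disjoint (B ∩ A) (Aᶜ : Finset ι) := by
          rw [Finset.disjoint_right]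
          intro j hj
          simp only [Finset.mem_compl] at hj
          simp [Finset.mem_inter, hj]
        have h5 : fmax B b = max (fmax (B ∩ A) b) c := by
          conv_lhs => rw [hBdecomp]
          rw [fmax_union hdisj]
        rw [h5]
    have hkey := keyH b A c hc0
    rw [dif_pos hA] at hkey
    rw [hsum, hkey]
    rcases le_total (A.inf' hA b) c with h | h
    · rw [max_eq_right h, max_eq_right (by linarith), sub_self]
    · rw [max_eq_left h, max_eq_left (by linarith)]

lemma fmax_integrable {Ω : Type*} [MeasurableSpace Ω] {μ : Measure Ω}
    {ι : Type*} (a : Ω → ι → ℝ) (ha : ∀ i, Integrable (fun ω => a ω i) μ)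
    (B : Finset ι) : Integrable (fun ω => fmax B (a ω)) μ := by
  classical
  induction B using Finset.induction_on with
  | empty => simp only [fmax_empty]; exact integrable_zero _ _ _
  | @insert i B hi ih =>
      simp only [fmax_insert hi]
      have := (ha i).sup ih
      simpa [Pi.sup_def] using this

/-- For a finite measure `μ`, a nonnegative integrable `w : Ω → [0,∞)^I` and `x > 0`,
with `V^B(x) = ∫ max_{i∈B} w_i(ω)/x_i dμ`, the Möbius-type combination
`d_A(x) = Σ_{B ⊇ Aᶜ, B ≠ ∅} (-1)^(|B∩A|+1) V^B(x)` equals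
`∫ [min_{i∈A} w_i(ω)/x_i − max_{j∈Aᶜ} w_j(ω)/x_j]_+ dμ`, and in particular `d_A(x) ≥ 0`. -/
theorem moebius_combination_eq_integral {Ω : Type*} [MeasurableSpace Ω]
    (μ : Measure Ω) [IsFiniteMeasure μ]
    {ι : Type*} [Fintype ι] [DecidableEq ι] [Nonempty ι]
    (w : Ω → ι → ℝ) (hwm : ∀ i, Measurable fun ω => w ω i)
    (hw0 : ∀ ω i, 0 ≤ w ω i) (hwint : ∀ i, Integrable (fun ω => w ω i) μ)
    (x : ι → ℝ) (hx : ∀ i, 0 < x i) (A : Finset ι) (hA : A.Nonempty) :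
    (∑ B ∈ Finset.univ.powerset.filter (fun B => Aᶜ ⊆ B ∧ B.Nonempty),
        (-1 : ℝ) ^ ((B ∩ A).card + 1) * ∫ ω, fmax B (fun i => w ω i / x i) ∂μ)
      = ∫ ω, max ((A.inf' hA fun i => w ω i / x i) - fmax Aᶜ (fun i => w ω i / x i)) 0 ∂μ
    ∧ 0 ≤ ∑ B ∈ Finset.univ.powerset.filter (fun B => Aᶜ ⊆ B ∧ B.Nonempty),
        (-1 : ℝ) ^ ((B ∩ A).card + 1) * ∫ ω, fmax B (fun i => w ω i / x i) ∂μ := by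
  have hint : ∀ B : Finset ι, Integrable (fun ω => fmax B (fun i => w ω i / x i)) μ :=
    fmax_integrable _ (fun i => (hwint i).div_const (x i))
  have key : (∑ B ∈ Finset.univ.powerset.filter (fun B => Aᶜ ⊆ B ∧ B.Nonempty),
        (-1 : ℝ) ^ ((B ∩ A).card + 1) * ∫ ω, fmax B (fun i => w ω i / x i) ∂μ)
      = ∫ ω, max ((A.inf' hA fun i => w ω i / x i) - fmax Aᶜ (fun i => w ω i / x i)) 0 ∂μ := by
    calc
      _ = ∑ B ∈ Finset.univ.powerset.filter (fun B => Aᶜ ⊆ B ∧ B.Nonempty),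
            ∫ ω, (-1 : ℝ) ^ ((B ∩ A).card + 1) * fmax B (fun i => w ω i / x i) ∂μ := by
          exact Finset.sum_congr rfl fun B _ => (integral_const_mul _ _).symm
      _ = ∫ ω, ∑ B ∈ Finset.univ.powerset.filter (fun B => Aᶜ ⊆ B ∧ B.Nonempty),
            (-1 : ℝ) ^ ((B ∩ A).card + 1) * fmax B (fun i => w ω i / x i) ∂μ :=
          (integral_finset_sum _ fun B _ => (hint B).const_mul _).symm
      _ = _ := by
          refine integral_congr_ae (Filter.Eventually.of_forall fun ω => ?_)
          exact pointwise_moebius _ (fun i => div_nonneg (hw0 ω i) (hx i).le) A hA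
  exact ⟨key, key ▸ integral_nonneg fun ω => le_max_right _ _⟩
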